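/- arXiv:2410.24089 — 4 statements merged into one kernel-verified Lean document; each statement's English description precedes it below -/
import Mathlib

section
/- Let P be an S×S row-stochastic matrix (S finite) such that every column contains at least one positive entry (every state is accessible), and suppose every row of P has at most U nonzero entries. Then rank(P) ≥ ⌊S/U⌋. -/
open Matrix Finset

/-!
Each column `j` has a nonzero entry in some row, hence in some row of a basis of the row space
chosen among the rows (otherwise the whole row space would lie in the kernel of the `j`-th
coordinate). So the supports of these `rank P` rows, each of size at most `U`, cover all `S`
columns, and `S ≤ U * rank P`.
-/

theorem exists_mem_apply_ne_zero_of_mem_span {K ι : Type*} [Field K] {s : Set (ι → K)}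
    {v : ι → K} (hv : v ∈ Submodule.span K s) {j : ι} (hj : v j ≠ 0) :
    ∃ w ∈ s, w j ≠ 0 := by
  by_contra! h
  have hker : Submodule.span K s ≤
      LinearMap.ker (LinearMap.proj (R := K) (φ := fun _ : ι => K) j) :=
    Submodule.span_le.mpr h
  exact hj (hker hv)

theorem card_le_card_mul_of_supports_cover {K ι : Type*} [Field K] [DecidableEq K] [Fintype ι]
    (t : Finset (ι → K)) {U : ℕ} (hcover : ∀ j, ∃ w ∈ t, w j ≠ 0)
    (hU : ∀ w ∈ t, #{j | w j ≠ 0} ≤ U) :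
    Fintype.card ι ≤ #t * U := by
  classical
  calc Fintype.card ι = #(univ : Finset ι) := rfl
    _ ≤ #(t.biUnion fun w => {j | w j ≠ 0}) := card_le_card fun j _ => by
        obtain ⟨w, hw, hwj⟩ := hcover j
        exact mem_biUnion.mpr ⟨w, hw, mem_filter.mpr ⟨mem_univ j, hwj⟩⟩
    _ ≤ ∑ w ∈ t, #{j | w j ≠ 0} := card_biUnion_le
    _ ≤ #t * U := sum_le_card_nsmul _ _ _ hU

theorem Matrix.card_le_rank_mul {K m n : Type*} [Field K] [DecidableEq K] [Fintype m] [Fintype n]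
    (M : Matrix m n K) {U : ℕ} (hcol : ∀ j, ∃ i, M i j ≠ 0)
    (hrow : ∀ i, #{j | M i j ≠ 0} ≤ U) :
    Fintype.card n ≤ M.rank * U := by
  obtain ⟨b, hb_sub, hb_span, hb_indep⟩ := exists_linearIndependent K (Set.range M)
  have : Fintype b := ((Set.finite_range M).subset hb_sub).fintype
  have hrank : M.rank = #b.toFinset := by
    rw [rank_eq_finrank_span_row, row_def, ← hb_span, finrank_span_set_eq_card hb_indep]
  rw [hrank]
  refine card_le_card_mul_of_supports_cover _ (fun j => ?_) (fun w hw => ?_)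
  · obtain ⟨i, hi⟩ := hcol j
    have hmem : M i ∈ Submodule.span K b := hb_span ▸ Submodule.subset_span ⟨i, rfl⟩
    simpa only [Set.mem_toFinset] using exists_mem_apply_ne_zero_of_mem_span hmem hi
  · obtain ⟨i, rfl⟩ := hb_sub (Set.mem_toFinset.mp hw)
    exact hrow i

theorem stmt0_general (S U : ℕ) (P : Matrix (Fin S) (Fin S) ℝ)
    (hcol : ∀ j, ∃ i, 0 < P i j)
    (hU : ∀ i, (Finset.univ.filter (fun j => P i j ≠ 0)).card ≤ U) :
    S / U ≤ P.rank := by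
  have h := P.card_le_rank_mul (fun j => (hcol j).imp fun _ => ne_of_gt) hU
  rw [Fintype.card_fin, mul_comm] at h
  exact Nat.div_le_of_le_mul h

/-- Row-stochastic matrix with every column accessible and at most `U` nonzero
entries per row has rank at least `⌊S/U⌋`. -/
theorem stmt0 (S U : ℕ) (P : Matrix (Fin S) (Fin S) ℝ)
    (hnn : ∀ i j, 0 ≤ P i j)
    (hrow : ∀ i, ∑ j, P i j = 1)
    (hcol : ∀ j, ∃ i, 0 < P i j)
    (hU : ∀ i, (Finset.univ.filter (fun j => P i j ≠ 0)).card ≤ U) :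
    S / U ≤ P.rank :=
  stmt0_general S U P hcol hU
end

section
/- Any matrix A ∈ ℝ^{d×S} can materialize the transition kernel only if d bounds the number of pairwise linearly independent rows one can construct greedily: formally, given a row-stochastic matrix P on a countably infinite state space where every state is accessible and each row has at most U < ∞ nonzero entries, P admits no factorization P = ΦᵀM with finite-dimensional Φ, M (i.e., no finite d suffices). -/
/-- On a countably infinite state space, a transition kernel with every state
accessible and at most `U < ∞` directly reachable states per state-action pair
admits no finite-dimensional linear factorization. -/
theorem stmt3 (A : Type*) [Fintype A] [Nonempty A] (U : ℕ)
    (P : ℕ → A → ℕ → ℝ)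
    (hnn : ∀ s a s', 0 ≤ P s a s')
    (hrow : ∀ s a, ∑' s', P s a s' = 1)
    (hfin : ∀ s a, {s' | P s a s' ≠ 0}.Finite)
    (hU : ∀ s a, {s' | P s a s' ≠ 0}.ncard ≤ U)
    (hcol : ∀ s', ∃ s a, 0 < P s a s') :
    ¬ ∃ (d : ℕ) (φ : ℕ → A → Fin d → ℝ) (μ : ℕ → Fin d → ℝ),
        ∀ s a s', P s a s' = ∑ i, φ s a i * μ s' i := by
  rintro ⟨d, φ, μ, hfac⟩
  classical
  set S : Set (Fin d → ℝ) := Set.range (fun p : ℕ × A => φ p.1 p.2) with hS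
  obtain ⟨b, hbS, hspaneq, hli⟩ := exists_linearIndependent ℝ S
  have hbfin : b.Finite := hli.setFinite
  -- witness rows for each basis vector
  have hwit : ∀ v : (Fin d → ℝ), ∃ p : ℕ × A, v ∈ b → φ p.1 p.2 = v := by
    intro v
    by_cases hv : v ∈ b
    · obtain ⟨p, hp⟩ := hbS hv
      exact ⟨p, fun _ => hp⟩
    · exact ⟨(0, Classical.arbitrary A), fun h => absurd h hv⟩
  choose g hg using hwit
  -- union of supports of the chosen rows: a finite set
  have hFfin : (⋃ v ∈ b, {s' | P (g v).1 (g v).2 s' ≠ 0}).Finite :=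
    hbfin.biUnion (fun v _ => hfin _ _)
  obtain ⟨s', hs'⟩ := hFfin.infinite_compl.nonempty
  obtain ⟨s, a, hpos⟩ := hcol s'
  -- the linear functional pairing with μ s'
  let L : (Fin d → ℝ) →ₗ[ℝ] ℝ :=
    { toFun := fun c => ∑ i, c i * μ s' i
      map_add' := by
        intro x y
        simp [add_mul, Finset.sum_add_distrib]
      map_smul' := by
        intro r x
        simp [Finset.mul_sum, mul_assoc] }
  have hker : b ⊆ (LinearMap.ker L : Set (Fin d → ℝ)) := by
    intro v hv
    have hvsupp : s' ∉ {t | P (g v).1 (g v).2 t ≠ 0} := by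
      intro h
      exact hs' (Set.mem_biUnion hv h)
    have h0 : P (g v).1 (g v).2 s' = 0 := by
      by_contra h
      exact hvsupp h
    have : L v = P (g v).1 (g v).2 s' := by
      show (∑ i, v i * μ s' i) = P (g v).1 (g v).2 s'
      rw [hfac, hg v hv]
    simp [LinearMap.mem_ker, this, h0]
  have hmem : φ s a ∈ Submodule.span ℝ b := by
    rw [hspaneq]
    exact Submodule.subset_span ⟨(s, a), rfl⟩
  have hL0 : L (φ s a) = 0 := by
    have := Submodule.span_le.mpr hker hmem
    simpa using this
  have : P s a s' = 0 := by
    rw [hfac]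
    simpa [L] using hL0
  linarith
end

section
/- Elliptical potential lemma: let φ_1,…,φ_K ∈ ℝ^d, Λ_k = λI + Σ_{j<k} φ_j φ_jᵀ with λ > 0. Then Σ_{k=1}^K min{1, ‖φ_k‖²_{Λ_k^{-1}}} ≤ 2 ln(det(Λ_{K+1})/det(λI)). -/
open Matrix Finset

/-!
By the matrix determinant lemma, each rank-one update multiplies the determinant by
`1 + φₖ ⬝ᵥ Λₖ⁻¹ *ᵥ φₖ`, so the logarithms of these factors telescope to `log (det Λ_K / det Λ₀)`.
Each summand is then bounded through `min 1 x ≤ 2 log (1 + x)` for `x ≥ 0`.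
-/

lemma min_one_le_two_mul_log_one_add {x : ℝ} (hx : 0 ≤ x) :
    min 1 x ≤ 2 * Real.log (1 + x) := by
  have hpos : 0 < 1 + x := by linarith
  have hlog : x / (1 + x) ≤ Real.log (1 + x) := by
    have h := Real.one_sub_inv_le_log_of_pos hpos
    rwa [show 1 - (1 + x)⁻¹ = x / (1 + x) by field_simp; ring] at h
  have hmin : min 1 x ≤ 2 * (x / (1 + x)) := by
    rw [mul_div_assoc', le_div_iff₀ hpos]
    rcases le_total x 1 with h | h
    · rw [min_eq_right h]; nlinarith
    · rw [min_eq_left h]; linarith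
  linarith

theorem Matrix.det_add_vecMulVec {n α : Type*} [Fintype n] [DecidableEq n] [CommRing α]
    {A : Matrix n n α} (hA : IsUnit A.det) (u v : n → α) :
    (A + vecMulVec u v).det = A.det * (1 + v ⬝ᵥ A⁻¹ *ᵥ u) := by
  rw [vecMulVec_eq Unit, det_add_replicateCol_mul_replicateRow hA,
    det_unique (1 + _ : Matrix Unit Unit α), ← replicateRow_vecMul, add_apply, one_apply_eq,
    replicateRow_mul_replicateCol_apply, dotProduct_mulVec]

theorem Matrix.PosDef.add_vecMulVec_self {n : Type*} [Fintype n] {A : Matrix n n ℝ}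
    (hA : A.PosDef) (u : n → ℝ) : (A + vecMulVec u u).PosDef :=
  hA.add_posSemidef (posSemidef_vecMulVec_self_star u)

section EllipticalPotential

variable {n : Type*} [Fintype n] {Λ : ℕ → Matrix n n ℝ} {φ : ℕ → n → ℝ}

theorem posDef_of_succ_eq_add_vecMulVec (h0 : (Λ 0).PosDef)
    (hsucc : ∀ k, Λ (k + 1) = Λ k + vecMulVec (φ k) (φ k)) (k : ℕ) : (Λ k).PosDef := by
  induction k with
  | zero => exact h0
  | succ k ih => rw [hsucc k]; exact ih.add_vecMulVec_self (φ k)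

theorem sum_min_one_dotProduct_inv_mulVec_le_two_mul_log_det [DecidableEq n] (h0 : (Λ 0).PosDef)
    (hsucc : ∀ k, Λ (k + 1) = Λ k + vecMulVec (φ k) (φ k)) (K : ℕ) :
    ∑ k ∈ range K, min 1 (φ k ⬝ᵥ (Λ k)⁻¹ *ᵥ φ k) ≤ 2 * Real.log ((Λ K).det / (Λ 0).det) := by
  have hpos := posDef_of_succ_eq_add_vecMulVec h0 hsucc
  induction K with
  | zero => simp [(hpos 0).det_pos.ne']
  | succ K ih =>
    have hquad : 0 ≤ φ K ⬝ᵥ (Λ K)⁻¹ *ᵥ φ K := (hpos K).inv.posSemidef.dotProduct_mulVec_nonneg _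
    have hdet : (Λ (K + 1)).det = (Λ K).det * (1 + φ K ⬝ᵥ (Λ K)⁻¹ *ᵥ φ K) := by
      rw [hsucc K, det_add_vecMulVec (hpos K).det_pos.ne'.isUnit]
    calc ∑ k ∈ range (K + 1), min 1 (φ k ⬝ᵥ (Λ k)⁻¹ *ᵥ φ k)
        ≤ 2 * Real.log ((Λ K).det / (Λ 0).det) + 2 * Real.log (1 + φ K ⬝ᵥ (Λ K)⁻¹ *ᵥ φ K) := by
          rw [sum_range_succ]
          exact add_le_add ih (min_one_le_two_mul_log_one_add hquad)
      _ = 2 * Real.log ((Λ (K + 1)).det / (Λ 0).det) := by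
          rw [← mul_add, ← Real.log_mul (div_pos (hpos K).det_pos (hpos 0).det_pos).ne'
            (by positivity), hdet, mul_div_right_comm]

end EllipticalPotential

/-- Elliptical potential lemma:
`Σ_{k<K} min{1, ‖φₖ‖²_{Λₖ⁻¹}} ≤ 2 ln(det Λ_K / det(λI))` where
`Λₖ = λI + Σ_{j<k} φⱼφⱼᵀ`. -/
theorem stmt5 (d K : ℕ) (lam : ℝ) (hlam : 0 < lam) (φ : ℕ → Fin d → ℝ)
    (Λ : ℕ → Matrix (Fin d) (Fin d) ℝ)
    (hΛ : ∀ k, Λ k = lam • (1 : Matrix (Fin d) (Fin d) ℝ) +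
        ∑ j ∈ Finset.range k, Matrix.vecMulVec (φ j) (φ j)) :
    ∑ k ∈ Finset.range K, min 1 (φ k ⬝ᵥ ((Λ k)⁻¹ *ᵥ φ k)) ≤
      2 * Real.log ((Λ K).det / (lam • (1 : Matrix (Fin d) (Fin d) ℝ)).det) := by
  have hΛ0 : Λ 0 = lam • (1 : Matrix (Fin d) (Fin d) ℝ) := by simp [hΛ 0]
  have hsucc : ∀ k, Λ (k + 1) = Λ k + vecMulVec (φ k) (φ k) := fun k => by
    rw [hΛ, hΛ, sum_range_succ, add_assoc]
  rw [← hΛ0]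
  exact sum_min_one_dotProduct_inv_mulVec_le_two_mul_log_det (hΛ0 ▸ PosDef.one.smul hlam) hsucc K
end

section
/- Covering number of the optimistic value-function class: let 𝒪 = { s ↦ min{ max_a ( r(s,a) + φ(s,a)ᵀw + ‖φ(s,a)‖_A ), H } : ‖w‖₂ ≤ L, A ∈ ℝ^{d×d} symmetric PSD with ‖A‖_F ≤ B²√d/λ }, where ‖φ(s,a)‖₂ ≤ C for all (s,a). Then the ε-covering number 𝒩_ε of 𝒪 in sup distance satisfies ln 𝒩_ε ≤ d ln(1 + 4CL/ε) + d² ln(1 + 8B²C²√d/(λε²)). -/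
/-!
A function of the class depends on `(w, A)` only through the per-action quantities
`φᵀw + √(φᵀAφ)`, and `min {·, H}` and `max_a` are 1-Lipschitz. By Cauchy–Schwarz and
`|√x - √y| ≤ √|x - y|` (which needs `x ≥ 0` only, so the net matrices need not be PSD), these
quantities move by at most `C ‖w - w'‖ + √(C² ‖A - A'‖_F)`. Hence an `ε / (2C)`-net of the
`w`-ball and an `ε² / (4C²)`-net of the Frobenius ball give an `ε`-cover of the class, and by the
volume argument a ball of radius `R` in an `m`-dimensional space has a `δ`-net of at most
`(1 + 2R/δ)^m` points: a maximal `δ`-separated subset.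
-/

open Matrix Finset
open Metric MeasureTheory Module
open scoped NNReal ENNReal

section Packing

variable {E : Type*} [NormedAddCommGroup E] [NormedSpace ℝ E] [FiniteDimensional ℝ E]

theorem card_le_of_isSeparated_subset_closedBall {R : ℝ} (hR : 0 ≤ R) {δ : ℝ≥0} (hδ : 0 < δ)
    {P : Finset E} (hP : ↑P ⊆ closedBall (0 : E) R) (hsep : IsSeparated δ (P : Set E)) :
    (P.card : ℝ) ≤ (1 + 2 * R / δ) ^ finrank ℝ E := by
  borelize E
  set μ : Measure E := Measure.addHaar
  have hδ2 : (0 : ℝ) < δ / 2 := by positivity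
  have hvol : ∀ x : E, ∀ r : ℝ, 0 < r → μ.real (ball x r) = r ^ finrank ℝ E * μ.real (ball 0 1) :=
    fun x r hr => by
      simp [measureReal_def, Measure.addHaar_ball_of_pos μ x hr, ENNReal.toReal_ofReal, hr.le]
  have hdisj : (P : Set E).PairwiseDisjoint fun p => ball p (δ / 2) := by
    intro p hp q hq hpq
    refine Set.disjoint_left.2 fun z hzp hzq => ?_
    have hpq' : (δ : ℝ) < dist p q := by
      simpa [edist_dist, ENNReal.ofReal_lt_ofReal_iff', hδ] using hsep hp hq hpq
    have := dist_triangle_right p q z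
    rw [mem_ball'] at hzp hzq
    linarith
  have hsub : (⋃ p ∈ P, ball p (δ / 2)) ⊆ ball 0 (R + δ / 2) := by
    refine Set.iUnion₂_subset fun p hp => ball_subset_ball' ?_
    have := mem_closedBall_zero_iff.1 (hP hp)
    rw [dist_zero_right]
    linarith
  have hunit : 0 < μ.real (ball (0 : E) 1) := by
    simpa [measureReal_def] using
      ENNReal.toReal_pos (measure_ball_pos μ (0 : E) one_pos).ne' measure_ball_lt_top.ne
  have key : (P.card : ℝ) * (δ / 2) ^ finrank ℝ E * μ.real (ball 0 1)
      ≤ (R + δ / 2) ^ finrank ℝ E * μ.real (ball 0 1) := calc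
    _ = ∑ p ∈ P, μ.real (ball p (δ / 2)) := by simp [hvol _ _ hδ2, mul_assoc]
    _ = μ.real (⋃ p ∈ P, ball p (δ / 2)) :=
      (measureReal_biUnion_finset hdisj fun p _ => measurableSet_ball).symm
    _ ≤ μ.real (ball 0 (R + δ / 2)) := measureReal_mono hsub
    _ = _ := hvol 0 _ (by positivity)
  have hratio : 1 + 2 * R / δ = (R + δ / 2) / (δ / 2) := by field_simp; ring
  rw [hratio, div_pow, le_div_iff₀ (by positivity)]
  exact le_of_mul_le_mul_right key hunit

theorem exists_finset_isCover_closedBall {R : ℝ} (hR : 0 ≤ R) {δ : ℝ≥0} (hδ : 0 < δ) :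
    ∃ T : Finset E, IsCover δ (closedBall (0 : E) R) (T : Set E) ∧
      (T.card : ℝ) ≤ (1 + 2 * R / δ) ^ finrank ℝ E := by
  classical
  have hfin : packingNumber δ (closedBall (0 : E) R) ≠ ⊤ := by
    obtain ⟨N, -, hN, hcover⟩ :=
      exists_finite_isCover_of_isCompact (ε := δ / 2) (by positivity)
        (isCompact_closedBall (0 : E) R)
    have h := packingNumber_two_mul_le_externalCoveringNumber (δ / 2) (closedBall (0 : E) R)
    rw [mul_div_cancel₀ _ two_ne_zero] at h
    exact ne_top_of_le_ne_top hN.encard_lt_top.ne (h.trans hcover.externalCoveringNumber_le_encard)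
  have hPfin : (maximalSeparatedSet δ (closedBall (0 : E) R)).Finite :=
    Set.encard_ne_top_iff.1 (by rwa [encard_maximalSeparatedSet hfin])
  refine ⟨hPfin.toFinset, by simpa using isCover_maximalSeparatedSet hfin, ?_⟩
  exact card_le_of_isSeparated_subset_closedBall hR hδ (by simpa using maximalSeparatedSet_subset)
    (by simpa using isSeparated_maximalSeparatedSet)

end Packing

theorem exists_finset_sqrt_sum_sq_sub_le (ι : Type*) [Fintype ι] {R δ : ℝ} (hR : 0 ≤ R)
    (hδ : 0 < δ) :
    ∃ T : Finset (ι → ℝ), (∀ x, √(∑ i, x i ^ 2) ≤ R → ∃ y ∈ T, √(∑ i, (x - y) i ^ 2) ≤ δ) ∧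
      (T.card : ℝ) ≤ (1 + 2 * R / δ) ^ Fintype.card ι := by
  classical
  obtain ⟨T, hcover, hcard⟩ := exists_finset_isCover_closedBall (E := EuclideanSpace ℝ ι) hR
    (δ := δ.toNNReal) (by simpa using hδ)
  rw [Real.coe_toNNReal _ hδ.le, finrank_euclideanSpace] at hcard
  refine ⟨T.image WithLp.ofLp, fun x hx => ?_, (Nat.cast_le.2 Finset.card_image_le).trans hcard⟩
  rw [isCover_iff_subset_iUnion_closedBall] at hcover
  obtain ⟨y, hyT, hxy⟩ := Set.mem_iUnion₂.1 <|
    hcover (a := WithLp.toLp 2 x) (by simpa [EuclideanSpace.norm_eq])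
  refine ⟨y.ofLp, Finset.mem_image_of_mem _ (by simpa using hyT), ?_⟩
  rw [mem_closedBall, dist_eq_norm, Real.coe_toNNReal _ hδ.le] at hxy
  simpa [EuclideanSpace.norm_eq] using hxy

theorem exists_finset_matrix_sqrt_sum_sq_sub_le (ι : Type*) [Fintype ι] {R δ : ℝ} (hR : 0 ≤ R)
    (hδ : 0 < δ) :
    ∃ T : Finset (Matrix ι ι ℝ), (∀ M : Matrix ι ι ℝ, √(∑ i, ∑ j, M i j ^ 2) ≤ R →
      ∃ M' ∈ T, √(∑ i, ∑ j, (M - M') i j ^ 2) ≤ δ) ∧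
      (T.card : ℝ) ≤ (1 + 2 * R / δ) ^ (Fintype.card ι ^ 2) := by
  classical
  obtain ⟨T, hcover, hcard⟩ := exists_finset_sqrt_sum_sq_sub_le (ι × ι) hR hδ
  rw [Fintype.card_prod, ← sq] at hcard
  refine ⟨T.image fun x => Matrix.of (Function.curry x), fun M hM => ?_,
    (Nat.cast_le.2 Finset.card_image_le).trans hcard⟩
  obtain ⟨x, hxT, hx⟩ := hcover (Function.uncurry M) (by rwa [Fintype.sum_prod_type])
  refine ⟨_, Finset.mem_image_of_mem _ hxT, ?_⟩
  rwa [Fintype.sum_prod_type] at hx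

theorem Real.abs_sqrt_sub_sqrt_le {x y : ℝ} (hx : 0 ≤ x) : |√x - √y| ≤ √|x - y| := by
  rcases le_total y 0 with hy | hy
  · rw [Real.sqrt_eq_zero_of_nonpos hy, sub_zero, abs_of_nonneg (Real.sqrt_nonneg x)]
    exact Real.sqrt_le_sqrt ((le_sub_self_iff x).2 hy |>.trans (le_abs_self _))
  rw [Real.le_sqrt (abs_nonneg _) (abs_nonneg _)]
  calc |√x - √y| ^ 2 = |√x - √y| * |√x - √y| := sq _
    _ ≤ |√x - √y| * (√x + √y) := by
      gcongr
      simpa [abs_of_nonneg, Real.sqrt_nonneg] using abs_sub (√x) (√y)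
    _ = |x - y| := by
      rw [← abs_of_nonneg (by positivity : 0 ≤ √x + √y), ← abs_mul]
      congr 1
      linear_combination Real.sq_sqrt hx - Real.sq_sqrt hy

theorem abs_sup'_sub_sup'_le {α : Type*} {s : Finset α} (hs : s.Nonempty) {f g : α → ℝ} {c : ℝ}
    (h : ∀ a ∈ s, |f a - g a| ≤ c) : |s.sup' hs f - s.sup' hs g| ≤ c := by
  refine abs_sub_le_iff.2 ⟨?_, ?_⟩ <;> rw [sub_le_iff_le_add] <;>
    refine Finset.sup'_le _ _ fun a ha => ?_
  · linarith [(abs_sub_le_iff.1 (h a ha)).1, Finset.le_sup' g ha]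
  · linarith [(abs_sub_le_iff.1 (h a ha)).2, Finset.le_sup' f ha]

theorem abs_dotProduct_le {ι : Type*} [Fintype ι] (v w : ι → ℝ) :
    |v ⬝ᵥ w| ≤ √(∑ i, v i ^ 2) * √(∑ i, w i ^ 2) := by
  refine (Finset.abs_sum_le_sum_abs _ _).trans ?_
  simpa [abs_mul] using Real.sum_mul_le_sqrt_mul_sqrt Finset.univ (|v ·|) (|w ·|)

theorem abs_dotProduct_mulVec_le {ι : Type*} [Fintype ι] (v : ι → ℝ) (M : Matrix ι ι ℝ) :
    |v ⬝ᵥ (M *ᵥ v)| ≤ (∑ i, v i ^ 2) * √(∑ i, ∑ j, M i j ^ 2) := by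
  have hrows : ∑ i, (M *ᵥ v) i ^ 2 ≤ (∑ i, ∑ j, M i j ^ 2) * ∑ j, v j ^ 2 := by
    rw [Finset.sum_mul]
    gcongr with i
    exact Finset.sum_mul_sq_le_sq_mul_sq _ _ _
  calc |v ⬝ᵥ (M *ᵥ v)| ≤ √(∑ i, v i ^ 2) * √(∑ i, (M *ᵥ v) i ^ 2) := abs_dotProduct_le _ _
    _ ≤ √(∑ i, v i ^ 2) * (√(∑ i, ∑ j, M i j ^ 2) * √(∑ i, v i ^ 2)) := by
      rw [← Real.sqrt_mul (by positivity) (∑ i, v i ^ 2)]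
      exact mul_le_mul_of_nonneg_left (Real.sqrt_le_sqrt hrows) (Real.sqrt_nonneg _)
    _ = (∑ i, v i ^ 2) * √(∑ i, ∑ j, M i j ^ 2) := by
      rw [mul_left_comm, Real.mul_self_sqrt (by positivity), mul_comm]

theorem abs_dotProduct_add_sqrt_sub_le {ι : Type*} [Fintype ι] {v w w' : ι → ℝ}
    {M M' : Matrix ι ι ℝ} {C : ℝ} (hv : √(∑ i, v i ^ 2) ≤ C) (hM : 0 ≤ v ⬝ᵥ (M *ᵥ v)) :
    |(v ⬝ᵥ w + √(v ⬝ᵥ (M *ᵥ v))) - (v ⬝ᵥ w' + √(v ⬝ᵥ (M' *ᵥ v)))|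
      ≤ C * √(∑ i, (w - w') i ^ 2) + √(C ^ 2 * √(∑ i, ∑ j, (M - M') i j ^ 2)) := by
  have hv2 : ∑ i, v i ^ 2 ≤ C ^ 2 := (Real.sqrt_le_iff.1 hv).2
  have hlin : |v ⬝ᵥ w - v ⬝ᵥ w'| ≤ C * √(∑ i, (w - w') i ^ 2) := by
    rw [← dotProduct_sub]
    exact (abs_dotProduct_le _ _).trans (mul_le_mul_of_nonneg_right hv (Real.sqrt_nonneg _))
  have hquad : |v ⬝ᵥ (M *ᵥ v) - v ⬝ᵥ (M' *ᵥ v)| ≤ C ^ 2 * √(∑ i, ∑ j, (M - M') i j ^ 2) := by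
    rw [← dotProduct_sub, ← sub_mulVec]
    exact (abs_dotProduct_mulVec_le _ _).trans (mul_le_mul_of_nonneg_right hv2 (Real.sqrt_nonneg _))
  rw [add_sub_add_comm]
  exact (abs_add_le _ _).trans <|
    add_le_add hlin ((Real.abs_sqrt_sub_sqrt_le hM).trans (Real.sqrt_le_sqrt hquad))

section OptimisticValue

variable {S A ι : Type*} [Fintype A] [Nonempty A] [Fintype ι]

noncomputable def optimisticValue (r : S → A → ℝ) (φ : S → A → ι → ℝ) (H : ℝ) (w : ι → ℝ)
    (M : Matrix ι ι ℝ) (s : S) : ℝ :=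
  min (Finset.univ.sup' Finset.univ_nonempty
    fun a => r s a + φ s a ⬝ᵥ w + √(φ s a ⬝ᵥ (M *ᵥ φ s a))) H

theorem abs_optimisticValue_sub_le {r : S → A → ℝ} {φ : S → A → ι → ℝ} {H C : ℝ}
    (hφ : ∀ s a, √(∑ i, φ s a i ^ 2) ≤ C) {w w' : ι → ℝ} {M M' : Matrix ι ι ℝ}
    (hM : M.PosSemidef) (s : S) :
    |optimisticValue r φ H w M s - optimisticValue r φ H w' M' s|
      ≤ C * √(∑ i, (w - w') i ^ 2) + √(C ^ 2 * √(∑ i, ∑ j, (M - M') i j ^ 2)) := by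
  refine (abs_min_sub_min_le_max _ _ _ _).trans ?_
  rw [sub_self, abs_zero, max_eq_left (abs_nonneg _)]
  refine abs_sup'_sub_sup'_le _ fun a _ => ?_
  rw [add_assoc, add_assoc, add_sub_add_left_eq_sub]
  exact abs_dotProduct_add_sqrt_sub_le (hφ s a) (by simpa using hM.dotProduct_mulVec_nonneg (φ s a))

theorem exists_finset_optimisticValue_cover_of_pos (r : S → A → ℝ) (φ : S → A → ι → ℝ) (H : ℝ)
    {C L R ε : ℝ} (hC : 0 < C) (hL : 0 ≤ L) (hR : 0 ≤ R) (hε : 0 < ε)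
    (hφ : ∀ s a, √(∑ i, φ s a i ^ 2) ≤ C) :
    ∃ N : Finset (S → ℝ),
      (∀ (w : ι → ℝ) (M : Matrix ι ι ℝ), √(∑ i, w i ^ 2) ≤ L → M.PosSemidef →
        √(∑ i, ∑ j, M i j ^ 2) ≤ R → ∃ g ∈ N, ∀ s, |optimisticValue r φ H w M s - g s| ≤ ε) ∧
      (N.card : ℝ) ≤ (1 + 4 * C * L / ε) ^ Fintype.card ι *
        (1 + 8 * C ^ 2 * R / ε ^ 2) ^ (Fintype.card ι ^ 2) := by
  classical
  -- radii chosen so that the two error terms of `abs_optimisticValue_sub_le` are `ε / 2` each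
  have hδw : C * (ε / (2 * C)) = ε / 2 := by field_simp
  have hδA : C ^ 2 * (ε ^ 2 / (4 * C ^ 2)) = (ε / 2) ^ 2 := by field_simp; ring
  obtain ⟨Tw, hTw, hTwcard⟩ :=
    exists_finset_sqrt_sum_sq_sub_le ι hL (δ := ε / (2 * C)) (by positivity)
  obtain ⟨TM, hTM, hTMcard⟩ :=
    exists_finset_matrix_sqrt_sum_sq_sub_le ι hR (δ := ε ^ 2 / (4 * C ^ 2)) (by positivity)
  refine ⟨(Tw ×ˢ TM).image fun p => optimisticValue r φ H p.1 p.2, ?_, ?_⟩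
  · intro w M hw hM hMR
    obtain ⟨w', hw'Tw, hww'⟩ := hTw w hw
    obtain ⟨M', hM'TM, hMM'⟩ := hTM M hMR
    refine ⟨_, Finset.mem_image.2 ⟨(w', M'), Finset.mem_product.2 ⟨hw'Tw, hM'TM⟩, rfl⟩,
      fun s => ?_⟩
    calc _ ≤ C * √(∑ i, (w - w') i ^ 2) + √(C ^ 2 * √(∑ i, ∑ j, (M - M') i j ^ 2)) :=
          abs_optimisticValue_sub_le hφ hM s
      _ ≤ C * (ε / (2 * C)) + √(C ^ 2 * (ε ^ 2 / (4 * C ^ 2))) := by gcongr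
      _ = ε := by rw [hδw, hδA, Real.sqrt_sq (by positivity)]; ring
  · rw [show 2 * L / (ε / (2 * C)) = 4 * C * L / ε by field_simp; ring] at hTwcard
    rw [show 2 * R / (ε ^ 2 / (4 * C ^ 2)) = 8 * C ^ 2 * R / ε ^ 2 by field_simp; ring] at hTMcard
    calc _ ≤ ((Tw ×ˢ TM).card : ℝ) := Nat.cast_le.2 Finset.card_image_le
      _ = Tw.card * TM.card := by rw [Finset.card_product, Nat.cast_mul]
      _ ≤ _ := mul_le_mul hTwcard hTMcard (by positivity) (by positivity)

theorem exists_finset_optimisticValue_cover (r : S → A → ℝ) (φ : S → A → ι → ℝ) (H : ℝ)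
    {C L R ε : ℝ} (hC : 0 ≤ C) (hL : 0 ≤ L) (hR : 0 ≤ R) (hε : 0 < ε)
    (hφ : ∀ s a, √(∑ i, φ s a i ^ 2) ≤ C) :
    ∃ N : Finset (S → ℝ),
      (∀ (w : ι → ℝ) (M : Matrix ι ι ℝ), √(∑ i, w i ^ 2) ≤ L → M.PosSemidef →
        √(∑ i, ∑ j, M i j ^ 2) ≤ R → ∃ g ∈ N, ∀ s, |optimisticValue r φ H w M s - g s| ≤ ε) ∧
      (N.card : ℝ) ≤ (1 + 4 * C * L / ε) ^ Fintype.card ι *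
        (1 + 8 * C ^ 2 * R / ε ^ 2) ^ (Fintype.card ι ^ 2) := by
  rcases hC.eq_or_lt with rfl | hC
  · refine ⟨{optimisticValue r φ H 0 0},
      fun w M _ hM _ => ⟨_, Finset.mem_singleton_self _, fun s => ?_⟩, by simp⟩
    refine (abs_optimisticValue_sub_le hφ hM s (w' := 0) (M' := 0)).trans ?_
    simpa using hε.le
  · exact exists_finset_optimisticValue_cover_of_pos r φ H hC hL hR hε hφ

end OptimisticValue

theorem Real.log_natCast_le_of_le_pow_mul_pow {n k m : ℕ} {x y : ℝ} (hx : 1 ≤ x) (hy : 1 ≤ y)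
    (hn : (n : ℝ) ≤ x ^ k * y ^ m) : Real.log n ≤ k * Real.log x + m * Real.log y := by
  rcases n.eq_zero_or_pos with rfl | hn0
  · simp only [CharP.cast_eq_zero, Real.log_zero]
    have := Real.log_nonneg hx
    have := Real.log_nonneg hy
    positivity
  · calc Real.log n ≤ Real.log (x ^ k * y ^ m) := Real.log_le_log (by exact_mod_cast hn0) hn
      _ = k * Real.log x + m * Real.log y := by
        rw [Real.log_mul (by positivity) (by positivity), Real.log_pow, Real.log_pow]

theorem stmt10_general (S A : Type*) [Fintype A] [Nonempty A]
    (d : ℕ) (r : S → A → ℝ) (φ : S → A → Fin d → ℝ)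
    (C L B lam H ε : ℝ) (hC : 0 ≤ C) (hL : 0 ≤ L)
    (hlam : 0 < lam) (hε : 0 < ε)
    (hφ : ∀ s a, Real.sqrt (∑ i, (φ s a i) ^ 2) ≤ C) :
    ∃ N : Finset (S → ℝ),
      (∀ (w : Fin d → ℝ) (A2 : Matrix (Fin d) (Fin d) ℝ),
        Real.sqrt (∑ i, (w i) ^ 2) ≤ L → A2.PosSemidef →
        Real.sqrt (∑ i, ∑ j, (A2 i j) ^ 2) ≤ B ^ 2 * Real.sqrt d / lam →
        ∃ g ∈ N, ∀ s : S,
          |min (Finset.univ.sup' Finset.univ_nonempty (fun a =>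
              r s a + (∑ i, φ s a i * w i) +
                Real.sqrt (φ s a ⬝ᵥ (A2 *ᵥ φ s a)))) H - g s| ≤ ε) ∧
      Real.log N.card ≤ d * Real.log (1 + 4 * C * L / ε) +
        (d : ℝ) ^ 2 * Real.log (1 + 8 * B ^ 2 * C ^ 2 * Real.sqrt d / (lam * ε ^ 2)) := by
  obtain ⟨N, hcover, hcard⟩ := exists_finset_optimisticValue_cover r φ H hC hL
    (R := B ^ 2 * √d / lam) (by positivity) hε hφ
  rw [show 8 * C ^ 2 * (B ^ 2 * √d / lam) / ε ^ 2 = 8 * B ^ 2 * C ^ 2 * √d / (lam * ε ^ 2) by ring,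
    Fintype.card_fin] at hcard
  refine ⟨N, hcover, ?_⟩
  exact_mod_cast Real.log_natCast_le_of_le_pow_mul_pow (le_add_of_nonneg_right (by positivity))
    (le_add_of_nonneg_right (by positivity)) hcard

/-- Covering number of the optimistic value-function class:
`ln 𝒩_ε ≤ d ln(1 + 4CL/ε) + d² ln(1 + 8B²C²√d/(λε²))`. -/
theorem stmt10 (S A : Type*) [Fintype A] [Nonempty A]
    (d : ℕ) (r : S → A → ℝ) (φ : S → A → Fin d → ℝ)
    (C L B lam H ε : ℝ) (hC : 0 ≤ C) (hL : 0 ≤ L) (hB : 0 ≤ B)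
    (hlam : 0 < lam) (hH : 0 ≤ H) (hε : 0 < ε)
    (hφ : ∀ s a, Real.sqrt (∑ i, (φ s a i) ^ 2) ≤ C) :
    ∃ N : Finset (S → ℝ),
      (∀ (w : Fin d → ℝ) (A2 : Matrix (Fin d) (Fin d) ℝ),
        Real.sqrt (∑ i, (w i) ^ 2) ≤ L → A2.PosSemidef →
        Real.sqrt (∑ i, ∑ j, (A2 i j) ^ 2) ≤ B ^ 2 * Real.sqrt d / lam →
        ∃ g ∈ N, ∀ s : S,
          |min (Finset.univ.sup' Finset.univ_nonempty (fun a =>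
              r s a + (∑ i, φ s a i * w i) +
                Real.sqrt (φ s a ⬝ᵥ (A2 *ᵥ φ s a)))) H - g s| ≤ ε) ∧
      Real.log N.card ≤ d * Real.log (1 + 4 * C * L / ε) +
        (d : ℝ) ^ 2 * Real.log (1 + 8 * B ^ 2 * C ^ 2 * Real.sqrt d / (lam * ε ^ 2)) :=
  stmt10_general S A d r φ C L B lam H ε hC hL hlam hε hφ
end
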